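/- arXiv:2404.19261 — 3 statements merged into one kernel-verified Lean document; each statement's English description precedes it below -/
import Mathlib

section
/- Let A and B be n×n real symmetric PSD matrices with ‖A‖_op < 1. If the largest eigenvalue of A + B is at least 1, then the largest eigenvalue of (I − A)^{-1/2} B (I − A)^{-1/2} is at least 1. -/
/-!
Argue by contraposition. Writing `X = 1 - A`, the matrix `S = X R` is invertible and satisfies
`Sᴴ S = X` and `Sᴴ (R B R) S = B`, so the congruence by `S` carries `1 - R B R` to `1 - (A + B)`.
Congruence by an invertible matrix preserves positive definiteness, and for a Hermitian matrix `M`,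
`1 - M` is positive definite exactly when the top of the spectrum of `M` lies below `1`.
-/

open Matrix
open scoped Matrix.Norms.L2Operator ComplexOrder

namespace Matrix

variable {n : Type*} [Fintype n] [DecidableEq n]

theorem IsHermitian.posDef_iff_spectrum_pos {𝕜 : Type*} [RCLike 𝕜] {M : Matrix n n 𝕜}
    (hM : M.IsHermitian) : M.PosDef ↔ ∀ x ∈ spectrum ℝ M, 0 < x := by
  simp [hM.posDef_iff_eigenvalues_pos, hM.spectrum_real_eq_range_eigenvalues]

theorem IsHermitian.sSup_spectrum_lt_iff {𝕜 : Type*} [RCLike 𝕜] [Nonempty n] {M : Matrix n n 𝕜}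
    (hM : M.IsHermitian) (c : ℝ) :
    sSup (spectrum ℝ M) < c ↔ (algebraMap ℝ (Matrix n n 𝕜) c - M).PosDef := by
  have hne : (spectrum ℝ M).Nonempty :=
    hM.spectrum_real_eq_range_eigenvalues ▸ Set.range_nonempty _
  have hc : (algebraMap ℝ (Matrix n n 𝕜) c - M).IsHermitian :=
    (IsSelfAdjoint.algebraMap _ (.all c)).sub hM
  rw [Set.Finite.csSup_lt_iff finite_real_spectrum hne, hc.posDef_iff_spectrum_pos,
    ← spectrum.singleton_sub_eq]
  simp

theorem star_mul_one_sub_mul_eq_sub_of_mul_self_eq_inv {α : Type*} [CommRing α] [StarRing α]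
    {X R : Matrix n n α} (hX : X.IsHermitian) (hR : R.IsHermitian) (hXu : IsUnit X)
    (hRX : R * R = X⁻¹) (M : Matrix n n α) :
    star (X * R) * (1 - R * M * R) * (X * R) = X - M := by
  have hdet : IsUnit X.det := (isUnit_iff_isUnit_det X).mp hXu
  have hcomm : R * X = X * R := calc
    R * X = X * X⁻¹ * R * X := by rw [mul_nonsing_inv X hdet, one_mul]
    _ = X * R * (R * R) * X := by rw [← hRX]; simp only [mul_assoc]
    _ = X * R := by rw [hRX, mul_assoc, nonsing_inv_mul X hdet, mul_one]
  have hRXR : R * X * R = 1 := by rw [hcomm, mul_assoc, hRX, mul_nonsing_inv X hdet]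
  have hsq : R * X * (X * R) = X := by rw [hcomm, mul_assoc, ← mul_assoc R, hRXR, mul_one]
  have hconj : R * X * (R * M * R) * (X * R) = M := calc
    R * X * (R * M * R) * (X * R) = (R * X * R) * M * (R * X * R) := by simp only [mul_assoc]
    _ = M := by rw [hRXR, one_mul, mul_one]
  rw [star_mul, star_eq_conjTranspose, star_eq_conjTranspose, hX.eq, hR.eq, mul_sub, sub_mul,
    mul_one, hsq, hconj]

end Matrix

/-- For symmetric PSD `A`, `B` with `‖A‖ < 1`: if the largest eigenvalue of
`A + B` is at least `1`, then so is the largest eigenvalue of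
`(I − A)^{-1/2} B (I − A)^{-1/2}`, where `R` denotes the PSD square root of
`(I − A)⁻¹`. -/
theorem maxEig_conj_ge_one {n : ℕ} (hn : 0 < n)
    (A B : Matrix (Fin n) (Fin n) ℝ)
    (hA : A.PosSemidef) (hB : B.PosSemidef)
    (hAnorm : ‖A‖ < 1)
    (R : Matrix (Fin n) (Fin n) ℝ)
    (hR : R.PosSemidef) (hRsq : R * R = (1 - A)⁻¹)
    (h : 1 ≤ sSup (spectrum ℝ (A + B))) :
    1 ≤ sSup (spectrum ℝ (R * B * R)) := by
  have : Nonempty (Fin n) := ⟨⟨0, hn⟩⟩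
  have hX : IsUnit (1 - A) := isUnit_one_sub_of_norm_lt_one hAnorm
  have hS : IsUnit ((1 - A) * R) := .of_mul_eq_one R <| by
    rw [mul_assoc, hRsq, mul_nonsing_inv _ ((isUnit_iff_isUnit_det _).mp hX)]
  have hconj : star ((1 - A) * R) * (1 - R * B * R) * ((1 - A) * R) = 1 - (A + B) := by
    rw [star_mul_one_sub_mul_eq_sub_of_mul_self_eq_inv (isHermitian_one.sub hA.isHermitian)
      hR.isHermitian hX hRsq, sub_sub]
  have hRBR : (R * B * R).IsHermitian := by
    simpa only [hR.isHermitian.eq] using isHermitian_conjTranspose_mul_mul R hB.isHermitian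
  by_contra! hlt
  rw [hRBR.sSup_spectrum_lt_iff, map_one, ← hS.posDef_star_left_conjugate_iff, hconj,
    ← map_one (algebraMap ℝ _), ← (hA.isHermitian.add hB.isHermitian).sSup_spectrum_lt_iff] at hlt
  exact hlt.not_ge h
end

section
/- Let A, B be n×n real symmetric PSD matrices and suppose ‖A‖_op < 1. For the linear recursion p_{t+1} = (A + B) p_t on ℝⁿ, p_t → 0 as t → ∞ for every initial p_0 if and only if the largest eigenvalue of (I − A)⁻¹B is strictly less than 1. -/
/-!
For symmetric `M`, the iterates `M ^ t * p` tend to `0` for every `p` iff every eigenvalue of `M`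
has modulus `< 1`; for `M = A + B ⪰ 0` this says `I - A - B ≻ 0`. The norm bounds the spectrum,
so `‖A‖ < 1` gives `I - A ≻ 0`, whose inverse has a square root `S`. Then `(I - A)⁻¹ B = S (S B)`
has the same spectrum as the symmetric matrix `S B S`, whose eigenvalues are `< 1` iff
`I - S B S = S (I - A - B) S ≻ 0`, which by congruence is again `I - A - B ≻ 0`.
-/

open Matrix Filter
open scoped Matrix.Norms.L2Operator

namespace Matrix

open scoped ComplexOrder

variable {n 𝕜 : Type*} [Fintype n] [DecidableEq n] [RCLike 𝕜]

theorem spectrum_mul_comm {R K : Type*} [CommRing R] [Field K] [Algebra R K]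
    (A B : Matrix n n K) : spectrum R (A * B) = spectrum R (B * A) := by
  ext x
  simp only [← spectrum.algebraMap_mem_iff K (R := R), mem_spectrum_iff_isRoot_charpoly,
    charpoly_mul_comm]

theorem IsHermitian.posDef_iff_spectrum_pos_s6 {H : Matrix n n 𝕜} (hH : H.IsHermitian) :
    H.PosDef ↔ ∀ x ∈ spectrum ℝ H, 0 < x := by
  simp [hH.posDef_iff_eigenvalues_pos, hH.spectrum_real_eq_range_eigenvalues]

theorem IsHermitian.posDef_one_sub_iff {P : Matrix n n 𝕜} (hP : P.IsHermitian) :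
    (1 - P).PosDef ↔ ∀ x ∈ spectrum ℝ P, x < 1 := by
  rw [(isHermitian_one.sub hP).posDef_iff_spectrum_pos_s6, ← map_one (algebraMap ℝ _),
    ← spectrum.singleton_sub_eq]
  simp

theorem IsHermitian.sSup_spectrum_lt_one_iff {P : Matrix n n 𝕜} (hP : P.IsHermitian) :
    sSup (spectrum ℝ P) < 1 ↔ (1 - P).PosDef := by
  rw [hP.posDef_one_sub_iff]
  rcases isEmpty_or_nonempty n with _ | _
  · -- the spectrum is empty and `sSup ∅ = 0`
    simp [spectrum.of_subsingleton]
  · rw [hP.spectrum_real_eq_range_eigenvalues,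
      (Set.finite_range _).csSup_lt_iff (Set.range_nonempty _)]

theorem forall_tendsto_diagonal_pow_mulVec_zero_iff (d : n → 𝕜) :
    (∀ q : n → 𝕜, Tendsto (fun t : ℕ => diagonal d ^ t *ᵥ q) atTop (nhds 0)) ↔
      ∀ i, ‖d i‖ < 1 := by
  simp only [diagonal_pow, mulVec_diagonal, tendsto_pi_nhds, Pi.pow_apply, Pi.zero_apply]
  refine ⟨fun h i => ?_, fun h q i => ?_⟩
  · simpa [tendsto_pow_atTop_nhds_zero_iff_norm_lt_one] using h 1 i
  · simpa using (tendsto_pow_atTop_nhds_zero_iff_norm_lt_one.mpr (h i)).mul_const (q i)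

theorem forall_tendsto_conj_pow_mulVec_zero_iff (U : unitary (Matrix n n 𝕜))
    (D : Matrix n n 𝕜) :
    (∀ p : n → 𝕜,
      Tendsto (fun t : ℕ => Unitary.conjStarAlgAut 𝕜 _ U D ^ t *ᵥ p) atTop (nhds 0)) ↔
      ∀ q : n → 𝕜, Tendsto (fun t : ℕ => D ^ t *ᵥ q) atTop (nhds 0) := by
  have hmulVec (V : Matrix n n 𝕜) {f : ℕ → n → 𝕜} (hf : Tendsto f atTop (nhds 0)) :
      Tendsto (fun t => V *ᵥ f t) atTop (nhds 0) :=
    ((mulVecLin V).continuous_of_finiteDimensional.tendsto' 0 0 (mulVec_zero V)).comp hf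
  have hconj (t : ℕ) (p : n → 𝕜) : Unitary.conjStarAlgAut 𝕜 _ U D ^ t *ᵥ p =
      (U : Matrix n n 𝕜) *ᵥ (D ^ t *ᵥ (star (U : Matrix n n 𝕜) *ᵥ p)) := by
    rw [← map_pow, Unitary.conjStarAlgAut_apply, mulVec_mulVec, mulVec_mulVec, Matrix.mul_assoc]
  have hstar_mul (q : n → 𝕜) :
      star (U : Matrix n n 𝕜) *ᵥ ((U : Matrix n n 𝕜) *ᵥ q) = q := by
    rw [mulVec_mulVec, Unitary.coe_star_mul_self, one_mulVec]
  simp only [hconj]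
  refine ⟨fun h q => ?_, fun h p => hmulVec _ (h _)⟩
  simpa only [hstar_mul] using hmulVec (star U : Matrix n n 𝕜) (h ((U : Matrix n n 𝕜) *ᵥ q))

theorem IsHermitian.forall_tendsto_pow_mulVec_zero_iff {M : Matrix n n 𝕜} (hM : M.IsHermitian) :
    (∀ p : n → 𝕜, Tendsto (fun t : ℕ => M ^ t *ᵥ p) atTop (nhds 0)) ↔
      ∀ i, |hM.eigenvalues i| < 1 := by
  conv_lhs => rw [hM.spectral_theorem]
  rw [forall_tendsto_conj_pow_mulVec_zero_iff, forall_tendsto_diagonal_pow_mulVec_zero_iff]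
  simp

theorem PosSemidef.forall_tendsto_pow_mulVec_zero_iff {M : Matrix n n 𝕜} (hM : M.PosSemidef) :
    (∀ p : n → 𝕜, Tendsto (fun t : ℕ => M ^ t *ᵥ p) atTop (nhds 0)) ↔
      (1 - M).PosDef := by
  rw [hM.1.forall_tendsto_pow_mulVec_zero_iff, hM.1.posDef_one_sub_iff,
    hM.1.spectrum_real_eq_range_eigenvalues, Set.forall_mem_range]
  simp only [abs_of_nonneg (hM.eigenvalues_nonneg _)]

theorem IsHermitian.posDef_one_sub_of_norm_lt_one {A : Matrix n n 𝕜} (hA : A.IsHermitian)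
    (h : ‖A‖ < 1) : (1 - A).PosDef := by
  have hone : ‖(1 : Matrix n n 𝕜)‖ ≤ 1 := by
    rw [cstar_norm_def, map_one]
    exact ContinuousLinearMap.norm_id_le
  refine hA.posDef_one_sub_iff.mpr fun x hx => ?_
  have hx' := spectrum.norm_le_norm_mul_of_mem ((spectrum.algebraMap_mem_iff 𝕜).mpr hx)
  rw [Algebra.algebraMap_eq_smul_one, norm_smul, norm_one, mul_one, Real.norm_eq_abs] at hx'
  have := mul_le_of_le_one_right (norm_nonneg A) hone
  linarith [le_abs_self x]

open scoped MatrixOrder in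
theorem PosDef.sSup_spectrum_inv_mul_lt_one_iff {N B : Matrix n n 𝕜} (hN : N.PosDef)
    (hB : B.IsHermitian) : sSup (spectrum ℝ (N⁻¹ * B)) < 1 ↔ (N - B).PosDef := by
  set S := CFC.sqrt N⁻¹
  have hS : star S = S := (CFC.sqrt_nonneg _).posSemidef.1
  have hSS : S * S = N⁻¹ := CFC.sqrt_mul_sqrt_self _ hN.inv.posSemidef.nonneg
  have hSNS : S * N * S = 1 := by
    refine mul_eq_one_comm.mp ?_
    rw [← Matrix.mul_assoc, hSS, nonsing_inv_mul _ ((isUnit_iff_isUnit_det N).mp hN.isUnit)]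
  have hSunit : IsUnit S := IsStrictlyPositive.isUnit_cfcSqrt _ hN.inv.isStrictlyPositive
  have hP : (S * B * S).IsHermitian := by
    simpa only [← star_eq_conjTranspose, hS] using isHermitian_conjTranspose_mul_mul S hB
  calc sSup (spectrum ℝ (N⁻¹ * B)) < 1 ↔ sSup (spectrum ℝ (S * B * S)) < 1 := by
        rw [← hSS, Matrix.mul_assoc, spectrum_mul_comm, Matrix.mul_assoc]
    _ ↔ (1 - S * B * S).PosDef := hP.sSup_spectrum_lt_one_iff
    _ ↔ (star S * (N - B) * S).PosDef := by rw [hS, Matrix.mul_sub, Matrix.sub_mul, hSNS]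
    _ ↔ (N - B).PosDef := hSunit.posDef_star_left_conjugate_iff

end Matrix

theorem recursion_tendsto_zero_iff_general {n : ℕ}
    (A B : Matrix (Fin n) (Fin n) ℝ)
    (hA : A.PosSemidef) (hB : B.PosSemidef)
    (hAnorm : ‖A‖ < 1) :
    (∀ p₀ : Fin n → ℝ,
      Tendsto (fun t : ℕ => ((A + B) ^ t).mulVec p₀) atTop (nhds 0)) ↔
    sSup (spectrum ℝ ((1 - A)⁻¹ * B)) < 1 := by
  rw [(hA.add hB).forall_tendsto_pow_mulVec_zero_iff,
    (hA.1.posDef_one_sub_of_norm_lt_one hAnorm).sSup_spectrum_inv_mul_lt_one_iff hB.1, sub_sub]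

/-- For symmetric PSD `A`, `B` with `‖A‖ < 1`, the linear recursion
`p_{t+1} = (A + B) p_t` converges to `0` for every initial condition iff the
largest eigenvalue of `(I − A)⁻¹ B` is strictly less than `1`. -/
theorem recursion_tendsto_zero_iff {n : ℕ} (hn : 0 < n)
    (A B : Matrix (Fin n) (Fin n) ℝ)
    (hA : A.PosSemidef) (hB : B.PosSemidef)
    (hAnorm : ‖A‖ < 1) :
    (∀ p₀ : Fin n → ℝ,
      Tendsto (fun t : ℕ => ((A + B) ^ t).mulVec p₀) atTop (nhds 0)) ↔
    sSup (spectrum ℝ ((1 - A)⁻¹ * B)) < 1 :=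
  recursion_tendsto_zero_iff_general A B hA hB hAnorm
end

section
/- Let J be a D×P real matrix, z ∈ ℝᴰ, η > 0, B ≤ D, and P_t be i.i.d. random diagonal batch matrices (indicator of uniformly random B-subsets). For the SGD update z_{t+1} = z_t − (η/B) J Jᵀ P_t z_t, the conditional expectation satisfies E[z_{t+1} z_{t+1}ᵀ | z_t] = z_t z_tᵀ − η(Θ̂ z_t z_tᵀ + z_t z_tᵀ Θ̂) + (β̃/β) η² Θ̂ z_t z_tᵀ Θ̂ + ((1 − β̃)/β) η² Θ̂ diag(z_t z_tᵀ) Θ̂, where Θ̂ = (1/D) J Jᵀ, β = B/D, β̃ = (B−1)/(D−1). -/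
/-!
Expanding `z' z'ᵀ`, the batch matrix `P` enters linearly in the cross terms and only through
`P Z P` in the quadratic term, so averaging over batches needs just `E[P] = β I` and
`E[P M P] = β β̃ M + β (1 - β̃) diag M`. Both are counting statements: a uniformly random
`B`-subset of `D` indices contains a given index with probability `B / D` and a given pair of
distinct indices with probability `B (B - 1) / (D (D - 1))`, the cases `|t| = 1, 2` of
`#{s ⊇ t} · C(D, |t|) = C(D, B) · C(B, |t|)`.
-/

open Matrix Finset

namespace Finset

theorem card_filter_powersetCard_subset_mul_choose {α : Type*} [DecidableEq α]
    {t u : Finset α} (htu : t ⊆ u) (k : ℕ) :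
    #{s ∈ u.powersetCard k | t ⊆ s} * (#u).choose #t = (#u).choose k * k.choose #t := by
  by_cases htk : #t ≤ k
  · rw [card_filter_powersetCard_subset t u k htu htk, Nat.choose_mul htk, mul_comm]
  · push Not at htk
    have hempty : {s ∈ u.powersetCard k | t ⊆ s} = ∅ :=
      filter_false_of_mem fun s hs hts =>
        (card_le_card hts).not_gt ((mem_powersetCard.1 hs).2 ▸ htk)
    rw [hempty, Nat.choose_eq_zero_of_lt htk]
    simp

end Finset

section BatchMatrix

variable {ι K : Type*} [DecidableEq ι]

theorem cast_card_filter_mem_powersetCard_univ [Fintype ι] [Field K] [CharZero K]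
    (i : ι) (k : ℕ) :
    (#{s ∈ univ.powersetCard k | i ∈ s} : K) =
      (Fintype.card ι).choose k * (k / Fintype.card ι) := by
  have h := card_filter_powersetCard_subset_mul_choose (subset_univ {i}) k
  simp only [singleton_subset_iff, card_singleton, Nat.choose_one_right, card_univ] at h
  have hι : (Fintype.card ι : K) ≠ 0 := Nat.cast_ne_zero.2 (Fintype.card_pos_iff.2 ⟨i⟩).ne'
  rw [mul_div_assoc', eq_div_iff hι]
  exact_mod_cast h

theorem cast_card_filter_mem_and_mem_powersetCard_univ [Fintype ι] [Field K] [CharZero K]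
    {i j : ι} (hij : i ≠ j) (k : ℕ) :
    (#{s ∈ univ.powersetCard k | i ∈ s ∧ j ∈ s} : K) =
      (Fintype.card ι).choose k * (k / Fintype.card ι * ((k - 1) / (Fintype.card ι - 1))) := by
  have h := card_filter_powersetCard_subset_mul_choose (subset_univ {i, j}) k
  simp only [insert_subset_iff, singleton_subset_iff, card_pair hij, card_univ] at h
  have h2 : 2 ≤ Fintype.card ι := by
    simpa [card_pair hij] using card_le_univ ({i, j} : Finset ι)
  have hn : (Fintype.card ι : K) * (Fintype.card ι - 1) ≠ 0 :=
    mul_ne_zero (Nat.cast_ne_zero.2 (by omega))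
      (sub_ne_zero.2 (by exact_mod_cast (by omega : Fintype.card ι ≠ 1)))
  have hK := congrArg (Nat.cast : ℕ → K) h
  push_cast [Nat.cast_choose_two] at hK
  rw [div_mul_div_comm, mul_div_assoc', eq_div_iff hn]
  linear_combination 2 * hK

def batchMatrix [Zero K] [One K] (s : Finset ι) : Matrix ι ι K :=
  diagonal fun i => if i ∈ s then 1 else 0

theorem batchMatrix_mul_mul_batchMatrix_apply [Fintype ι] [NonAssocSemiring K]
    (s : Finset ι) (M : Matrix ι ι K) (i j : ι) :
    (batchMatrix s * M * batchMatrix s : Matrix ι ι K) i j =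
      if i ∈ s ∧ j ∈ s then M i j else 0 := by
  by_cases hi : i ∈ s <;> by_cases hj : j ∈ s <;> simp [batchMatrix, hi, hj]

theorem sum_batchMatrix [Fintype ι] [Field K] [CharZero K] (k : ℕ) :
    ∑ s ∈ univ.powersetCard k, (batchMatrix s : Matrix ι ι K) =
      ((Fintype.card ι).choose k * (k / Fintype.card ι) : K) • 1 := by
  ext i j
  rcases eq_or_ne i j with rfl | hij
  · simp [batchMatrix, Matrix.sum_apply, ← cast_card_filter_mem_powersetCard_univ i k]
  · simp [batchMatrix, Matrix.sum_apply, hij]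

theorem sum_batchMatrix_mul_mul_batchMatrix [Fintype ι] [Field K] [CharZero K]
    (k : ℕ) (M : Matrix ι ι K) :
    ∑ s ∈ univ.powersetCard k, batchMatrix s * M * batchMatrix s =
      let β : K := k / Fintype.card ι
      let β' : K := (k - 1) / (Fintype.card ι - 1)
      ((Fintype.card ι).choose k * (β * β')) • M +
        ((Fintype.card ι).choose k * (β * (1 - β'))) • diagonal (fun i => M i i) := by
  ext i j
  simp only [Matrix.sum_apply, batchMatrix_mul_mul_batchMatrix_apply, sum_ite, sum_const_zero,
    add_zero, sum_const, nsmul_eq_mul, Matrix.add_apply, Matrix.smul_apply, smul_eq_mul,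
    diagonal_apply]
  rcases eq_or_ne i j with rfl | hij
  · simp only [and_self, cast_card_filter_mem_powersetCard_univ, if_true]
    ring
  · simp only [cast_card_filter_mem_and_mem_powersetCard_univ hij, if_neg hij]
    ring

end BatchMatrix

theorem Matrix.vecMulVec_sub_smul_mulVec {n R : Type*} [Fintype n] [CommRing R]
    (M : Matrix n n R) (z : n → R) (c : R) :
    vecMulVec (z - c • M *ᵥ z) (z - c • M *ᵥ z) =
      vecMulVec z z - c • (M * vecMulVec z z + vecMulVec z z * Mᵀ) +
        c ^ 2 • (M * vecMulVec z z * Mᵀ) := by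
  simp only [vecMulVec_sub, sub_vecMulVec, vecMulVec_smul, smul_vecMulVec, mul_vecMulVec,
    vecMulVec_mul, vecMul_transpose]
  module

theorem second_moment_sgd_step_general {D P B : ℕ} (hB : 1 ≤ B) (hBD : B ≤ D)
    (η : ℝ)
    (J : Matrix (Fin D) (Fin P) ℝ) (z : Fin D → ℝ) :
    ((D.choose B : ℝ))⁻¹ •
      ∑ s ∈ (Finset.univ : Finset (Fin D)).powersetCard B,
        (let z' := z - (η / (B : ℝ)) •
            (J * Jᵀ * Matrix.diagonal (fun i => if i ∈ s then (1 : ℝ) else 0)).mulVec z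
         Matrix.vecMulVec z' z') =
    (let Θ : Matrix (Fin D) (Fin D) ℝ := ((D : ℝ))⁻¹ • (J * Jᵀ)
     let Z : Matrix (Fin D) (Fin D) ℝ := Matrix.vecMulVec z z
     let β : ℝ := (B : ℝ) / (D : ℝ)
     let βt : ℝ := ((B : ℝ) - 1) / ((D : ℝ) - 1)
     Z - η • (Θ * Z + Z * Θ) + (βt / β * η ^ 2) • (Θ * Z * Θ) +
       ((1 - βt) / β * η ^ 2) • (Θ * Matrix.diagonal (fun i => Z i i) * Θ)) := by
  set A := J * Jᵀ
  have hstep (s : Finset (Fin D)) :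
      vecMulVec (z - (η / B) • (A * batchMatrix s) *ᵥ z) (z - (η / B) • (A * batchMatrix s) *ᵥ z) =
        vecMulVec z z - (η / B) • (A * batchMatrix s * vecMulVec z z +
          vecMulVec z z * batchMatrix s * A) +
            (η / B) ^ 2 • (A * (batchMatrix s * vecMulVec z z * batchMatrix s) * A) := by
    have hAP : (A * batchMatrix s)ᵀ = batchMatrix s * A := by
      rw [transpose_mul, batchMatrix, diagonal_transpose, transpose_mul, transpose_transpose]
    rw [vecMulVec_sub_smul_mulVec, hAP]
    simp only [Matrix.mul_assoc]
  dsimp only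
  simp only [← batchMatrix.eq_1]
  rw [sum_congr rfl fun s _ => hstep s]
  simp only [sum_add_distrib, sum_sub_distrib, ← smul_sum, ← mul_sum, ← sum_mul, sum_const,
    card_powersetCard, card_univ, Fintype.card_fin]
  rw [sum_batchMatrix, sum_batchMatrix_mul_mul_batchMatrix]
  have hB0 : (B : ℝ) ≠ 0 := Nat.cast_ne_zero.2 (by omega)
  have hC0 : (D.choose B : ℝ) ≠ 0 := Nat.cast_ne_zero.2 (Nat.choose_pos hBD).ne'
  simp only [Fintype.card_fin, smul_mul_assoc, mul_smul_comm, Matrix.mul_one, mul_add, add_mul,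
    Matrix.mul_assoc]
  match_scalars <;> field_simp

/-- One step of minibatch SGD on a linear model: with
`z' = z − (η/B) J Jᵀ P z` for a uniformly random batch matrix `P`, the
conditional second moment satisfies
`E[z' z'ᵀ] = zzᵀ − η(Θ̂ zzᵀ + zzᵀ Θ̂) + (β̃/β) η² Θ̂ zzᵀ Θ̂
  + ((1 − β̃)/β) η² Θ̂ diag(zzᵀ) Θ̂`,
where `Θ̂ = (1/D) J Jᵀ`, `β = B/D`, `β̃ = (B−1)/(D−1)`. -/
theorem second_moment_sgd_step {D P B : ℕ} (hB : 1 ≤ B) (hBD : B ≤ D)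
    (η : ℝ) (hη : 0 < η)
    (J : Matrix (Fin D) (Fin P) ℝ) (z : Fin D → ℝ) :
    ((D.choose B : ℝ))⁻¹ •
      ∑ s ∈ (Finset.univ : Finset (Fin D)).powersetCard B,
        (let z' := z - (η / (B : ℝ)) •
            (J * Jᵀ * Matrix.diagonal (fun i => if i ∈ s then (1 : ℝ) else 0)).mulVec z
         Matrix.vecMulVec z' z') =
    (let Θ : Matrix (Fin D) (Fin D) ℝ := ((D : ℝ))⁻¹ • (J * Jᵀ)
     let Z : Matrix (Fin D) (Fin D) ℝ := Matrix.vecMulVec z z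
     let β : ℝ := (B : ℝ) / (D : ℝ)
     let βt : ℝ := ((B : ℝ) - 1) / ((D : ℝ) - 1)
     Z - η • (Θ * Z + Z * Θ) + (βt / β * η ^ 2) • (Θ * Z * Θ) +
       ((1 - βt) / β * η ^ 2) • (Θ * Matrix.diagonal (fun i => Z i i) * Θ)) :=
  second_moment_sgd_step_general hB hBD η J z
end
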